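/- Let j ∈ ℕ, N = 2j+1, and t : M³ → ℂ, with φ its discrete Fourier presentation. Then φ_{abc} is real for every (a,b,c) ∈ ℤ³ if and only if for all (m₁,m₂,m₃) ∈ M³: conj(t(m₁,m₂,m₃)) = (−1)^{3j−|m₁|−|m₂|−|m₃|}·t(−m₁,−m₂,−m₃). -/

import Mathlib

/-
Conjugating `φ` turns `i^k` into `(-1)^k i^k` and flips the sign in the exponential, which the
substitution `m ↦ -m` undoes; so `conj φ` is the Fourier presentation of
`t*(m) = (-1)^{3j-|m₁|-|m₂|-|m₃|} conj(t(-m))`. The `N = 2j+1` integers `-j, …, j` are distinct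
modulo `N`, so by orthogonality of the `N`-th roots of unity the presentation determines `t` on
`M³`. Hence `φ` is real iff `t* = t` on `M³`, which is the stated condition after `m ↦ -m`.
-/

open Finset

/-- The discrete Fourier presentation of `t : M³ → ℂ`, where `M = {-j, …, j}`:
`φ_{abc} = Σ_{m∈M³} t(m₁,m₂,m₃) i^{3j-|m₁|-|m₂|-|m₃|} exp(-(2πi/N)(a m₁ + b m₂ + c m₃))`. -/
noncomputable def fourierPresentation (j N : ℕ) (t : ℤ → ℤ → ℤ → ℂ) :
    ℤ → ℤ → ℤ → ℂ :=
  fun a b c =>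
    ∑ m1 ∈ Finset.Icc (-(j : ℤ)) (j : ℤ), ∑ m2 ∈ Finset.Icc (-(j : ℤ)) (j : ℤ),
      ∑ m3 ∈ Finset.Icc (-(j : ℤ)) (j : ℤ),
        t m1 m2 m3 * Complex.I ^ (3 * (j : ℤ) - |m1| - |m2| - |m3|) *
          Complex.exp (-(2 * (Real.pi : ℂ) * Complex.I / (N : ℂ)) *
            ((a : ℂ) * (m1 : ℂ) + (b : ℂ) * (m2 : ℂ) + (c : ℂ) * (m3 : ℂ)))

open ComplexConjugate

namespace IsPrimitiveRoot

variable {K : Type*} [Field K] {ζ : K} {N : ℕ}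

theorem sum_zpow_mul_eq_zero (hζ : IsPrimitiveRoot ζ N) {d : ℤ} (hd : ¬(N : ℤ) ∣ d) :
    ∑ a ∈ range N, ζ ^ ((a : ℤ) * d) = 0 := by
  have hζd : ζ ^ d ≠ 1 := by rwa [Ne, hζ.zpow_eq_one_iff_dvd]
  have hζdN : (ζ ^ d) ^ N = 1 := by
    rw [← zpow_natCast, ← zpow_mul, mul_comm, zpow_mul, zpow_natCast, hζ.pow_eq_one, one_zpow]
  simp_rw [mul_comm _ d, zpow_mul, zpow_natCast]
  rw [geom_sum_eq hζd, hζdN, sub_self, zero_div]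

theorem eq_zero_of_forall_sum_zpow_mul_eq_zero [NeZero N] (hζ : IsPrimitiveRoot ζ N)
    {S : Finset ℤ} (hS : ∀ m ∈ S, ∀ m' ∈ S, (N : ℤ) ∣ m - m' → m = m') {F : ℤ → K}
    (hF : ∀ a : ℤ, ∑ m ∈ S, ζ ^ (a * m) * F m = 0) {m₀ : ℤ} (hm₀ : m₀ ∈ S) : F m₀ = 0 := by
  have hζ0 : ζ ≠ 0 := hζ.ne_zero (NeZero.ne N)
  have hinversion : ∑ a ∈ range N, ζ ^ (-((a : ℤ) * m₀)) * ∑ m ∈ S, ζ ^ ((a : ℤ) * m) * F m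
      = N * F m₀ := calc
    _ = ∑ m ∈ S, (∑ a ∈ range N, ζ ^ ((a : ℤ) * (m - m₀))) * F m := by
      simp_rw [mul_sum, sum_mul]
      rw [sum_comm]
      refine sum_congr rfl fun m _ => sum_congr rfl fun a _ => ?_
      rw [← mul_assoc, ← zpow_add₀ hζ0]
      ring_nf
    _ = ∑ m ∈ S, if m = m₀ then (N : K) * F m else 0 := by
      refine sum_congr rfl fun m hm => ?_
      split_ifs with h
      · simp [h]
      · rw [hζ.sum_zpow_mul_eq_zero fun hd => h (hS m hm m₀ hm₀ hd), zero_mul]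
    _ = N * F m₀ := by rw [sum_ite_eq', if_pos hm₀]
  simp only [hF, mul_zero, sum_const_zero] at hinversion
  exact (mul_eq_zero.1 hinversion.symm).resolve_left hζ.neZero'.out

theorem eq_zero_of_forall_sum3_zpow_mul_eq_zero [NeZero N] (hζ : IsPrimitiveRoot ζ N)
    {S : Finset ℤ} (hS : ∀ m ∈ S, ∀ m' ∈ S, (N : ℤ) ∣ m - m' → m = m') {g : ℤ → ℤ → ℤ → K}
    (hg : ∀ a b c : ℤ, ∑ m1 ∈ S, ∑ m2 ∈ S, ∑ m3 ∈ S,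
      ζ ^ (a * m1) * ζ ^ (b * m2) * ζ ^ (c * m3) * g m1 m2 m3 = 0) :
    ∀ m1 ∈ S, ∀ m2 ∈ S, ∀ m3 ∈ S, g m1 m2 m3 = 0 := by
  have hg1 : ∀ b c : ℤ, ∀ m1 ∈ S,
      ∑ m2 ∈ S, ∑ m3 ∈ S, ζ ^ (b * m2) * ζ ^ (c * m3) * g m1 m2 m3 = 0 := fun b c _ hm1 =>
    hζ.eq_zero_of_forall_sum_zpow_mul_eq_zero hS
      (F := fun m1 => ∑ m2 ∈ S, ∑ m3 ∈ S, ζ ^ (b * m2) * ζ ^ (c * m3) * g m1 m2 m3)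
      (fun a => by simpa only [mul_sum, mul_assoc] using hg a b c) hm1
  have hg2 : ∀ c : ℤ, ∀ m1 ∈ S, ∀ m2 ∈ S, ∑ m3 ∈ S, ζ ^ (c * m3) * g m1 m2 m3 = 0 :=
    fun c m1 hm1 _ hm2 => hζ.eq_zero_of_forall_sum_zpow_mul_eq_zero hS
      (F := fun m2 => ∑ m3 ∈ S, ζ ^ (c * m3) * g m1 m2 m3)
      (fun b => by simpa only [mul_sum, mul_assoc] using hg1 b c m1 hm1) hm2
  exact fun m1 hm1 m2 hm2 _ hm3 =>
    hζ.eq_zero_of_forall_sum_zpow_mul_eq_zero hS (fun c => hg2 c m1 hm1 m2 hm2) hm3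

end IsPrimitiveRoot

theorem Int.eq_of_dvd_sub_of_mem_Icc {j : ℤ} {m m' : ℤ} (hm : m ∈ Icc (-j) j)
    (hm' : m' ∈ Icc (-j) j) (h : 2 * j + 1 ∣ m - m') : m = m' := by
  rw [mem_Icc] at hm hm'
  have := Int.eq_zero_of_abs_lt_dvd h (by rw [abs_lt]; omega)
  omega

theorem sum_Icc_comp_neg {M : Type*} [AddCommMonoid M] (n : ℤ) (f : ℤ → M) :
    ∑ m ∈ Icc (-n) n, f (-m) = ∑ m ∈ Icc (-n) n, f m := by
  rw [← sum_neg_index]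
  congr
  ext m
  rw [mem_neg', mem_Icc, mem_Icc]
  omega

noncomputable def fourierRoot (N : ℕ) : ℂ := Complex.exp (-(2 * Real.pi * Complex.I / N))

theorem isPrimitiveRoot_fourierRoot {N : ℕ} (hN : N ≠ 0) : IsPrimitiveRoot (fourierRoot N) N := by
  rw [fourierRoot, Complex.exp_neg]
  exact (Complex.isPrimitiveRoot_exp N hN).inv

theorem fourierPresentation_eq_sum_zpow (j N : ℕ) (t : ℤ → ℤ → ℤ → ℂ) (a b c : ℤ) :
    fourierPresentation j N t a b c =
      ∑ m1 ∈ Icc (-(j : ℤ)) j, ∑ m2 ∈ Icc (-(j : ℤ)) j, ∑ m3 ∈ Icc (-(j : ℤ)) j,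
        fourierRoot N ^ (a * m1) * fourierRoot N ^ (b * m2) * fourierRoot N ^ (c * m3) *
          (t m1 m2 m3 * Complex.I ^ (3 * (j : ℤ) - |m1| - |m2| - |m3|)) := by
  refine sum_congr rfl fun m1 _ => sum_congr rfl fun m2 _ => sum_congr rfl fun m3 _ => ?_
  simp only [fourierRoot, ← Complex.exp_int_mul, ← Complex.exp_add]
  push_cast
  ring_nf

theorem fourierPresentation_eq_iff {j N : ℕ} (hN : N = 2 * j + 1) {t s : ℤ → ℤ → ℤ → ℂ} :
    (∀ a b c : ℤ, fourierPresentation j N t a b c = fourierPresentation j N s a b c) ↔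
      ∀ m1 ∈ Icc (-(j : ℤ)) j, ∀ m2 ∈ Icc (-(j : ℤ)) j, ∀ m3 ∈ Icc (-(j : ℤ)) j,
        t m1 m2 m3 = s m1 m2 m3 := by
  constructor
  · intro h
    have : NeZero N := ⟨by omega⟩
    have hζ := isPrimitiveRoot_fourierRoot (NeZero.ne N)
    have hS : ∀ m ∈ Icc (-(j : ℤ)) j, ∀ m' ∈ Icc (-(j : ℤ)) j, (N : ℤ) ∣ m - m' → m = m' :=
      fun m hm m' hm' hd => Int.eq_of_dvd_sub_of_mem_Icc hm hm' (by push_cast [hN] at hd; exact hd)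
    have hdiff := hζ.eq_zero_of_forall_sum3_zpow_mul_eq_zero hS
      (g := fun m1 m2 m3 => (t m1 m2 m3 - s m1 m2 m3) *
        Complex.I ^ (3 * (j : ℤ) - |m1| - |m2| - |m3|)) fun a b c => by
      simpa only [fourierPresentation_eq_sum_zpow, ← sum_sub_distrib, ← mul_sub, ← sub_mul]
        using sub_eq_zero.2 (h a b c)
    intro m1 hm1 m2 hm2 m3 hm3
    exact sub_eq_zero.1 <|
      (mul_eq_zero.1 (hdiff m1 hm1 m2 hm2 m3 hm3)).resolve_right (zpow_ne_zero _ Complex.I_ne_zero)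
  · intro h a b c
    exact sum_congr rfl fun m1 hm1 => sum_congr rfl fun m2 hm2 => sum_congr rfl fun m3 hm3 => by
      rw [h m1 hm1 m2 hm2 m3 hm3]

noncomputable def conjReflect (j : ℕ) (t : ℤ → ℤ → ℤ → ℂ) (m1 m2 m3 : ℤ) : ℂ :=
  (-1) ^ (3 * (j : ℤ) - |m1| - |m2| - |m3|) * conj (t (-m1) (-m2) (-m3))

theorem conj_fourierPresentation (j N : ℕ) (t : ℤ → ℤ → ℤ → ℂ) (a b c : ℤ) :
    conj (fourierPresentation j N t a b c) = fourierPresentation j N (conjReflect j t) a b c := by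
  simp only [fourierPresentation, map_sum]
  conv_rhs => rw [← sum_Icc_comp_neg]
  refine sum_congr rfl fun m1 _ => ?_
  conv_rhs => rw [← sum_Icc_comp_neg]
  refine sum_congr rfl fun m2 _ => ?_
  conv_rhs => rw [← sum_Icc_comp_neg]
  refine sum_congr rfl fun m3 _ => ?_
  simp only [conjReflect, neg_neg, abs_neg, map_mul, map_zpow₀, ← Complex.exp_conj, map_neg,
    map_div₀, map_add, Complex.conj_I, Complex.conj_ofReal, map_intCast, map_natCast, map_ofNat,
    neg_eq_neg_one_mul Complex.I, mul_zpow, Int.cast_neg]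
  ring_nf

theorem conjReflect_eqOn_iff (j : ℕ) (t : ℤ → ℤ → ℤ → ℂ) :
    (∀ m1 ∈ Icc (-(j : ℤ)) j, ∀ m2 ∈ Icc (-(j : ℤ)) j, ∀ m3 ∈ Icc (-(j : ℤ)) j,
        conjReflect j t m1 m2 m3 = t m1 m2 m3) ↔
      ∀ m1 ∈ Icc (-(j : ℤ)) j, ∀ m2 ∈ Icc (-(j : ℤ)) j, ∀ m3 ∈ Icc (-(j : ℤ)) j,
        conj (t m1 m2 m3) = (-1) ^ (3 * (j : ℤ) - |m1| - |m2| - |m3|) * t (-m1) (-m2) (-m3) := by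
  have hneg : ∀ m ∈ Icc (-(j : ℤ)) j, -m ∈ Icc (-(j : ℤ)) j := fun m hm => by
    rw [mem_Icc] at hm ⊢; omega
  have hsign : ∀ k : ℤ, (-1 : ℂ) ^ k * (-1) ^ k = 1 := fun k => by rw [← mul_zpow]; norm_num
  constructor
  · intro h m1 hm1 m2 hm2 m3 hm3
    have := h (-m1) (hneg m1 hm1) (-m2) (hneg m2 hm2) (-m3) (hneg m3 hm3)
    simp only [conjReflect, neg_neg, abs_neg] at this
    rw [← this, ← mul_assoc, hsign, one_mul]
  · intro h m1 hm1 m2 hm2 m3 hm3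
    have := h (-m1) (hneg m1 hm1) (-m2) (hneg m2 hm2) (-m3) (hneg m3 hm3)
    simp only [neg_neg, abs_neg] at this
    rw [conjReflect, this, ← mul_assoc, hsign, one_mul]

/-- The reality condition: the discrete Fourier presentation `φ` of `t` is real for all
integer indices iff `conj(t(m)) = (-1)^{3j-|m₁|-|m₂|-|m₃|} t(-m)` on `M³`. -/
theorem reality_condition (j N : ℕ) (hN : N = 2 * j + 1) (t : ℤ → ℤ → ℤ → ℂ)
    (φ : ℤ → ℤ → ℤ → ℂ) (hφ : φ = fourierPresentation j N t) :
    (∀ a b c : ℤ, (φ a b c).im = 0) ↔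
      (∀ m1 ∈ Finset.Icc (-(j : ℤ)) (j : ℤ), ∀ m2 ∈ Finset.Icc (-(j : ℤ)) (j : ℤ),
        ∀ m3 ∈ Finset.Icc (-(j : ℤ)) (j : ℤ),
          (starRingEnd ℂ) (t m1 m2 m3)
            = (-1 : ℂ) ^ (3 * (j : ℤ) - |m1| - |m2| - |m3|) * t (-m1) (-m2) (-m3)) := by
  subst hφ
  calc (∀ a b c : ℤ, (fourierPresentation j N t a b c).im = 0)
      ↔ ∀ a b c : ℤ, fourierPresentation j N (conjReflect j t) a b c
          = fourierPresentation j N t a b c := by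
        simp only [← conj_fourierPresentation, Complex.conj_eq_iff_im]
    _ ↔ _ := fourierPresentation_eq_iff hN
    _ ↔ _ := conjReflect_eqOn_iff j t
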